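/- Assume P satisfies a margin condition with radius r_0. Then for every optimal codebook c* ∈ 𝓜 and every codebook c ∈ B(0,M)^k with ‖c − c*‖ ≤ B r_0/(4√2 M), one has R(c) − R(c*) ≥ (p_min/2) ‖c − c*‖², where ‖c − c*‖² = ∑_{j=1}^k ‖c_j − c*_j‖². -/

import Mathlib

open MeasureTheory Metric
open scoped Classical ENNReal NNReal BigOperators RealInnerProductSpace

noncomputable section

namespace Kmeans


variable {H : Type*} [NormedAddCommGroup H] [InnerProductSpace ℝ H]
  [MeasurableSpace H]

/-- Distortion of a codebook `c` with respect to the measure `P`. -/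
def distortion (P : Measure H) (k : ℕ) (c : Fin k → H) : ℝ :=
  ∫ x, (⨅ j : Fin k, ‖x - c j‖ ^ 2) ∂P

/-- The `j`-th closed Voronoi cell of the codebook `c`. -/
def voronoi (k : ℕ) (c : Fin k → H) (j : Fin k) : Set H :=
  {x : H | ∀ i : Fin k, ‖x - c j‖ ≤ ‖x - c i‖}

/-- The set `𝓜` of optimal codebooks, i.e. minimizers of the distortion. -/
def optimal (P : Measure H) (k : ℕ) : Set (Fin k → H) :=
  {c | ∀ c' : Fin k → H, distortion P k c ≤ distortion P k c'}

/-- `B`: minimal separation between two codepoints of an optimal codebook. -/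
def Bsep (P : Measure H) (k : ℕ) : ℝ :=
  sInf {r : ℝ | ∃ c ∈ optimal P k, ∃ i j : Fin k, i ≠ j ∧ r = ‖c i - c j‖}

/-- `p_min`: minimal mass of a Voronoi cell of an optimal codebook. -/
def pmin (P : Measure H) (k : ℕ) : ℝ :=
  sInf {r : ℝ | ∃ c ∈ optimal P k, ∃ j : Fin k, r = (P (voronoi k c j)).toReal}

/-- `N(c)`: the skeleton of the Voronoi diagram of `c`. -/
def Ncrit (k : ℕ) (c : Fin k → H) : Set H :=
  ⋃ (i : Fin k) (j : Fin k) (_ : i ≠ j), {x : H | ‖x - c i‖ = ‖x - c j‖}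

/-- `p(t)`: maximal mass of the `t`-neighborhood of the skeleton of an optimal codebook. -/
def pweight (P : Measure H) (k : ℕ) (t : ℝ) : ℝ :=
  sSup {r : ℝ | ∃ c ∈ optimal P k, r = (P {x : H | infDist x (Ncrit k c) ≤ t}).toReal}

/-- `P` is `M`-bounded: its support is contained in the closed ball of radius `M`. -/
def MBounded (P : Measure H) (M : ℝ) : Prop :=
  P (closedBall (0 : H) M) = 1

/-- The support of `P` contains more than `k` points. -/
def SupportMoreThan (P : Measure H) (k : ℕ) : Prop :=
  ∃ S : Finset H, k < S.card ∧ ∀ x ∈ S, ∀ ε : ℝ, 0 < ε → 0 < P (ball x ε)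

/-- The margin condition with radius `r₀`. -/
def MarginCondition (P : Measure H) (k : ℕ) (M r₀ : ℝ) : Prop :=
  0 < r₀ ∧ MBounded P M ∧
    ∀ t : ℝ, 0 ≤ t → t ≤ r₀ →
      pweight P k t ≤ Bsep P k * pmin P k * t / (128 * M ^ 2)

/-- The cells `W_j(c)` forming a partition subordinated to the Voronoi diagram. -/
def Wcell (k : ℕ) (c : Fin k → H) (j : Fin k) : Set H :=
  voronoi k c j \ ⋃ (i : Fin k) (_ : i < j), voronoi k c i

/-- `𝓜‾`: codebooks satisfying the centroid condition (stationary points). -/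
def stationary (P : Measure H) (k : ℕ) : Set (Fin k → H) :=
  {c | ∀ i : Fin k, (P (Wcell k c i)).toReal • c i = ∫ x in Wcell k c i, x ∂P}

/-- `P` is `ε`-separated. -/
def Separated (P : Measure H) (k : ℕ) (ε : ℝ) : Prop :=
  ∀ c ∈ stationary P k \ optimal P k, ∀ cs ∈ optimal P k,
    ε ≤ distortion P k c - distortion P k cs

/-- Euclidean distance between codebooks. -/
def cbDist (k : ℕ) (c c' : Fin k → H) : ℝ :=
  Real.sqrt (∑ j : Fin k, ‖c j - c' j‖ ^ 2)

/-- The empirical measure of a sample. -/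
def empMeasure {n : ℕ} (X : Fin n → H) : Measure H :=
  ((n : ℝ≥0∞))⁻¹ • ∑ i : Fin n, Measure.dirac (X i)

/-- Number of optimal codebooks up to relabeling of codepoints. -/
def MbarCard (P : Measure H) (k : ℕ) : ℕ :=
  Set.ncard {s : Set (Fin k → H) |
    ∃ c ∈ optimal P k, s = {c' | ∃ π : Equiv.Perm (Fin k), c' = c ∘ π}}

/-- The mass `p_{ij}(c,t)` of a slab along the segment `[c_i, c_j]` intersected with `V_j(c)`. -/
def pij (P : Measure H) (k : ℕ) (c : Fin k → H) (i j : Fin k) (t : ℝ) : ℝ :=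
  (P ({x : H |
      0 ≤ ⟪x - (2⁻¹ : ℝ) • (c i + c j), ‖c i - c j‖⁻¹ • (c j - c i)⟫ ∧
      ⟪x - (2⁻¹ : ℝ) • (c i + c j), ‖c i - c j‖⁻¹ • (c j - c i)⟫ ≤ t} ∩
    voronoi k c j)).toReal

/-- The classification risk between two (ordered) partitions. -/
def classifRisk (P : Measure H) (k : ℕ) (C C' : Fin k → Set H) : ℝ :=
  sInf {r : ℝ | ∃ π : Equiv.Perm (Fin k),
    r = (P (⋃ j : Fin k, C (π j) ∩ (C' j)ᶜ)).toReal}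

/-- A sample is `f`-clusterable. -/
def Clusterable {n : ℕ} (X : Fin n → H) (k : ℕ) (f : ℝ) : Prop :=
  ∃ c ∈ optimal (empMeasure X) k, ∀ i j : Fin k, i ≠ j →
    f * Real.sqrt (distortion (empMeasure X) k c) *
      (1 / Real.sqrt ((Finset.univ.filter fun a => X a ∈ voronoi k c i).card) +
       1 / Real.sqrt ((Finset.univ.filter fun a => X a ∈ voronoi k c j).card))
      ≤ ‖c i - c j‖

/-- Membership in the class `𝓓(B₋, r₀₋, p₋, ε₋)` of distributions. -/
def inClassD (P : Measure H) (k : ℕ) (M Bm rm pm em : ℝ) : Prop :=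
  IsProbabilityMeasure P ∧ SupportMoreThan P k ∧
    (∃ r₀ : ℝ, rm ≤ r₀ ∧ MarginCondition P k M r₀) ∧
    Bm ≤ Bsep P k ∧ pm ≤ pmin P k ∧ Separated P k em

end Kmeans

/-!
Split `H` along the Voronoi cells `W j` of the optimal codebook `cs`; by the margin condition at
`t = 0` the skeleton `N(cs)` is null, so `P (W j) ≥ p_min`. Optimality makes `cs j` the centroid
of `W j`, hence `∫_{W j} ‖x - c j‖² = ∫_{W j} ‖x - cs j‖² + P (W j) ‖c j - cs j‖²`, and the
codebook `c` would gain at least `p_min ‖c - cs‖²` if every `x ∈ W j` stayed with `c j`. Moving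
`x` to a nearer `c i` gains back at most `8Mδ`, where `δ = ‖c - cs‖`, and only when `x` lies
within `4Mδ/B` of `N(cs)`; the margin condition bounds the mass of that neighbourhood by
`p_min δ / (32 M)`, so the loss is at most `p_min δ² / 4`.
-/

section InnerProductGeometry

variable {H : Type*} [NormedAddCommGroup H] [InnerProductSpace ℝ H]

lemma norm_sq_sub_norm_sq_eq_inner (u v : H) : ‖u‖ ^ 2 - ‖v‖ ^ 2 = ⟪u - v, u + v⟫ := by
  rw [inner_sub_left, inner_add_right, inner_add_right, real_inner_self_eq_norm_sq,
    real_inner_self_eq_norm_sq, real_inner_comm]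
  ring

lemma norm_sub_sq_sub_norm_sub_sq_le {x a b : H} {M : ℝ} (hx : ‖x‖ ≤ M) (ha : ‖a‖ ≤ M)
    (hb : ‖b‖ ≤ M) : ‖x - a‖ ^ 2 - ‖x - b‖ ^ 2 ≤ 4 * M * ‖a - b‖ := by
  have hsum : ‖(x - a) + (x - b)‖ ≤ 4 * M := by
    linarith [norm_add_le (x - a) (x - b), norm_sub_le x a, norm_sub_le x b]
  calc ‖x - a‖ ^ 2 - ‖x - b‖ ^ 2 = ⟪b - a, (x - a) + (x - b)⟫ := by
        rw [norm_sq_sub_norm_sq_eq_inner, sub_sub_sub_cancel_left]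
    _ ≤ ‖b - a‖ * ‖(x - a) + (x - b)‖ := real_inner_le_norm _ _
    _ ≤ ‖a - b‖ * (4 * M) := by rw [norm_sub_rev]; gcongr
    _ = 4 * M * ‖a - b‖ := mul_comm _ _

/-- `y` is the foot of the perpendicular from `x` to the bisector hyperplane of `[a, b]`. -/
lemma exists_norm_sub_eq_norm_sub_and_dist_eq (x : H) {a b : H} (hab : a ≠ b) :
    ∃ y : H, ‖y - a‖ = ‖y - b‖ ∧
      dist x y = |‖x - a‖ ^ 2 - ‖x - b‖ ^ 2| / (2 * ‖b - a‖) := by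
  set d := b - a
  have hd : 0 < ‖d‖ := norm_pos_iff.mpr (sub_ne_zero.mpr hab.symm)
  set s : ℝ := (‖x - a‖ ^ 2 - ‖x - b‖ ^ 2) / (2 * ‖d‖ ^ 2)
  refine ⟨x - s • d, ?_, ?_⟩
  · have hgap : ‖x - a‖ ^ 2 - ‖x - b‖ ^ 2 = ⟪d, (x - a) + (x - b)⟫ := by
      rw [norm_sq_sub_norm_sq_eq_inner, sub_sub_sub_cancel_left]
    have hzero : ‖x - s • d - a‖ ^ 2 - ‖x - s • d - b‖ ^ 2 = 0 := by
      rw [norm_sq_sub_norm_sq_eq_inner, sub_sub_sub_cancel_left,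
        show x - s • d - a + (x - s • d - b) = (x - a) + (x - b) - (2 * s) • d by
          rw [two_mul, add_smul]; abel,
        inner_sub_right, ← hgap, real_inner_smul_right, real_inner_self_eq_norm_sq]
      have : ‖b - a‖ ≠ 0 := hd.ne'
      simp only [s, d]
      field_simp
      ring
    nlinarith [norm_nonneg (x - s • d - a), norm_nonneg (x - s • d - b)]
  · rw [dist_eq_norm, sub_sub_cancel, norm_smul, Real.norm_eq_abs, abs_div,
      abs_of_pos (by positivity : (0 : ℝ) < 2 * ‖d‖ ^ 2)]
    field_simp

end InnerProductGeometry

section Centroid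

variable {H : Type*} [NormedAddCommGroup H] [InnerProductSpace ℝ H] [CompleteSpace H]
  [MeasurableSpace H] {μ : Measure H} [IsFiniteMeasure μ] {a : H}

lemma integral_norm_sub_sq_eq (hid : Integrable (fun x => x) μ)
    (ha : Integrable (fun x => ‖x - a‖ ^ 2) μ) (b : H) :
    ∫ x, ‖x - b‖ ^ 2 ∂μ =
      ∫ x, ‖x - a‖ ^ 2 ∂μ + 2 * ⟪a - b, ∫ x, (x - a) ∂μ⟫ + μ.real Set.univ * ‖a - b‖ ^ 2 := by
  have hsub : Integrable (fun x => x - a) μ := hid.sub (integrable_const a)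
  have hpt : ∀ x, ‖x - b‖ ^ 2 = ‖x - a‖ ^ 2 + 2 * ⟪a - b, x - a⟫ + ‖a - b‖ ^ 2 := fun x => by
    rw [← sub_add_sub_cancel x a b, norm_add_sq_real, real_inner_comm]
  have hlin : Integrable (fun x => 2 * ⟪a - b, x - a⟫) μ := (hsub.const_inner _).const_mul 2
  have hquad : Integrable (fun x => ‖x - a‖ ^ 2 + 2 * ⟪a - b, x - a⟫) μ := ha.add hlin
  rw [integral_congr_ae (ae_of_all μ hpt), integral_add hquad (integrable_const _),
    integral_add ha hlin, integral_const_mul, integral_inner hsub,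
    integral_const, smul_eq_mul]

/-- Otherwise moving `a` slightly towards `a + ∫ (x - a)` would decrease the quadratic
expansion `integral_norm_sub_sq_eq`. -/
lemma integral_sub_eq_zero_of_forall_le (hid : Integrable (fun x => x) μ)
    (ha : Integrable (fun x => ‖x - a‖ ^ 2) μ)
    (hmin : ∀ b, ∫ x, ‖x - a‖ ^ 2 ∂μ ≤ ∫ x, ‖x - b‖ ^ 2 ∂μ) : ∫ x, (x - a) ∂μ = 0 := by
  set m := ∫ x, (x - a) ∂μ
  set ε : ℝ := (μ.real Set.univ + 1)⁻¹
  have hε : 0 < ε := by positivity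
  have hεμ : ε * μ.real Set.univ < 1 := by
    rw [inv_mul_lt_one₀ (by positivity)]; linarith
  have hquad := hmin (a + ε • m)
  rw [integral_norm_sub_sq_eq hid ha (a + ε • m), sub_add_cancel_left, inner_neg_left,
    real_inner_smul_left, real_inner_self_eq_norm_sq, norm_neg, norm_smul,
    Real.norm_of_nonneg hε.le] at hquad
  have hdecrease : ε * (2 - ε * μ.real Set.univ) * ‖m‖ ^ 2 ≤ 0 := by nlinarith
  have hm : ‖m‖ ^ 2 ≤ 0 := by nlinarith [mul_pos hε (by linarith : 0 < 2 - ε * μ.real Set.univ)]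
  simpa using hm

lemma norm_le_of_integral_sub_eq_zero [NeZero μ] {M : ℝ} (hbound : ∀ᵐ x ∂μ, ‖x‖ ≤ M)
    (hid : Integrable (fun x => x) μ) (hcent : ∫ x, (x - a) ∂μ = 0) : ‖a‖ ≤ M := by
  have haverage : ⨍ x, x ∂μ = a := by
    rw [integral_sub hid (integrable_const a), integral_const, sub_eq_zero] at hcent
    rw [average_eq, hcent, smul_smul, inv_mul_cancel₀ measureReal_univ_ne_zero, one_smul]
  have hmem := (convex_closedBall (0 : H) M).average_mem isClosed_closedBall
    (hbound.mono fun x hx => mem_closedBall_zero_iff.mpr hx) hid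
  rwa [haverage, mem_closedBall_zero_iff] at hmem

end Centroid

namespace Kmeans

section Voronoi

variable {H : Type*} [NormedAddCommGroup H] {k : ℕ} (c : Fin k → H)

lemma isClosed_voronoi (j : Fin k) : IsClosed (voronoi k c j) := by
  simp only [voronoi, Set.ofPred_forall]
  exact isClosed_iInter fun i => isClosed_le (by fun_prop) (by fun_prop)

lemma measurableSet_voronoi [MeasurableSpace H] [BorelSpace H] (j : Fin k) :
    MeasurableSet (voronoi k c j) :=
  (isClosed_voronoi c j).measurableSet

lemma measurableSet_Wcell [MeasurableSpace H] [BorelSpace H] (j : Fin k) :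
    MeasurableSet (Wcell k c j) :=
  (measurableSet_voronoi c j).diff <| .iUnion fun i => .iUnion fun _ => measurableSet_voronoi c i

lemma Wcell_subset_voronoi (j : Fin k) : Wcell k c j ⊆ voronoi k c j :=
  Set.sdiff_subset

lemma pairwise_disjoint_Wcell : Pairwise (Function.onFun Disjoint (Wcell k c)) := by
  have hlt : ∀ i j : Fin k, i < j → Disjoint (Wcell k c i) (Wcell k c j) := fun i j hij =>
    Set.disjoint_left.mpr fun x hxi hxj => hxj.2 (Set.mem_biUnion hij hxi.1)
  intro i j hij
  rcases hij.lt_or_gt with h | h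
  · exact hlt i j h
  · exact (hlt j i h).symm

lemma exists_mem_voronoi [Nonempty (Fin k)] (x : H) : ∃ j, x ∈ voronoi k c j :=
  Finite.exists_min fun j => ‖x - c j‖

lemma iUnion_Wcell [NeZero k] : ⋃ j, Wcell k c j = Set.univ := by
  refine Set.eq_univ_of_forall fun x => ?_
  obtain ⟨j, hj, hmin⟩ := WellFounded.has_min wellFounded_lt {j | x ∈ voronoi k c j}
    (exists_mem_voronoi c x)
  refine Set.mem_iUnion.mpr ⟨j, hj, fun hx => ?_⟩
  obtain ⟨i, hij, hi⟩ := Set.mem_iUnion₂.mp hx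
  exact hmin i hi hij

lemma voronoi_inter_iUnion_voronoi_subset_Ncrit (j : Fin k) :
    voronoi k c j ∩ ⋃ (i : Fin k) (_ : i < j), voronoi k c i ⊆ Ncrit k c := by
  rintro x ⟨hj, hx⟩
  obtain ⟨i, hij, hi⟩ := Set.mem_iUnion₂.mp hx
  exact Set.mem_iUnion₂.mpr ⟨i, j, Set.mem_iUnion.mpr ⟨hij.ne, le_antisymm (hi j) (hj i)⟩⟩

lemma iInf_norm_sub_sq_le (x : H) (j : Fin k) : ⨅ i, ‖x - c i‖ ^ 2 ≤ ‖x - c j‖ ^ 2 :=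
  ciInf_le (Set.finite_range _).bddBelow j

lemma iInf_norm_sub_sq_of_mem_voronoi {x : H} {j : Fin k} (hx : x ∈ voronoi k c j) :
    ⨅ i, ‖x - c i‖ ^ 2 = ‖x - c j‖ ^ 2 :=
  have : Nonempty (Fin k) := ⟨j⟩
  (iInf_norm_sub_sq_le c x j).antisymm <| le_ciInf fun i => by gcongr; exact hx i

end Voronoi

section CodebookDistance

variable {H : Type*} [NormedAddCommGroup H] {k : ℕ}

lemma cbDist_sq (c c' : Fin k → H) : cbDist k c c' ^ 2 = ∑ j, ‖c j - c' j‖ ^ 2 :=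
  Real.sq_sqrt (Finset.sum_nonneg fun _ _ => sq_nonneg _)

lemma norm_sub_le_cbDist (c c' : Fin k → H) (j : Fin k) : ‖c j - c' j‖ ≤ cbDist k c c' := by
  rw [← abs_norm]
  exact Real.abs_le_sqrt
    (Finset.single_le_sum (f := fun i => ‖c i - c' i‖ ^ 2) (fun _ _ => sq_nonneg _)
      (Finset.mem_univ j))

end CodebookDistance

section BoundedSupport

variable {H : Type*} [NormedAddCommGroup H] [MeasurableSpace H] [BorelSpace H] {P : Measure H}
  {k : ℕ} {M : ℝ}

lemma MBounded.ae_norm_le [IsProbabilityMeasure P] (h : MBounded P M) : ∀ᵐ x ∂P, ‖x‖ ≤ M := by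
  have hball : ∀ᵐ x ∂P, x ∈ closedBall (0 : H) M :=
    (ae_mem_iff_measure_eq measurableSet_closedBall.nullMeasurableSet).mpr (by
      rw [measure_univ]; exact h)
  exact hball.mono fun x hx => mem_closedBall_zero_iff.mp hx

lemma integral_eq_sum_setIntegral_Wcell [NeZero k] (c : Fin k → H) {f : H → ℝ}
    (hf : Integrable f P) : ∫ x, f x ∂P = ∑ j, ∫ x in Wcell k c j, f x ∂P := by
  rw [← setIntegral_univ, ← iUnion_Wcell c]
  exact integral_iUnion_fintype (measurableSet_Wcell c) (pairwise_disjoint_Wcell c)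
    fun _ => hf.integrableOn

variable [SecondCountableTopology H] [IsFiniteMeasure P]

lemma integrable_id_of_ae_norm_le (hP : ∀ᵐ x ∂P, ‖x‖ ≤ M) : Integrable (fun x => x) P :=
  .of_bound aestronglyMeasurable_id M hP

lemma integrable_norm_sub_sq_of_ae_norm_le (hP : ∀ᵐ x ∂P, ‖x‖ ≤ M) (v : H) :
    Integrable (fun x => ‖x - v‖ ^ 2) P := by
  refine .of_bound (by fun_prop) ((M + ‖v‖) ^ 2) (hP.mono fun x hx => ?_)
  rw [Real.norm_of_nonneg (sq_nonneg _)]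
  have : ‖x - v‖ ≤ M + ‖v‖ := (norm_sub_le x v).trans (by linarith)
  gcongr

lemma integrable_iInf_norm_sub_sq_of_ae_norm_le [NeZero k] (hP : ∀ᵐ x ∂P, ‖x‖ ≤ M) (c : Fin k → H) :
    Integrable (fun x => ⨅ i, ‖x - c i‖ ^ 2) P := by
  refine (integrable_norm_sub_sq_of_ae_norm_le hP (c 0)).mono
    (Measurable.iInf fun i => by fun_prop).aestronglyMeasurable (ae_of_all _ fun x => ?_)
  have hnonneg : 0 ≤ ⨅ i, ‖x - c i‖ ^ 2 := le_ciInf fun i => sq_nonneg _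
  rw [Real.norm_of_nonneg hnonneg, Real.norm_of_nonneg (sq_nonneg _)]
  exact iInf_norm_sub_sq_le c x 0

lemma distortion_eq_sum_setIntegral_Wcell [NeZero k] (hP : ∀ᵐ x ∂P, ‖x‖ ≤ M) (c : Fin k → H) :
    distortion P k c = ∑ j, ∫ x in Wcell k c j, ‖x - c j‖ ^ 2 ∂P := by
  rw [distortion, integral_eq_sum_setIntegral_Wcell c
    (integrable_iInf_norm_sub_sq_of_ae_norm_le hP c)]
  exact Finset.sum_congr rfl fun j _ => setIntegral_congr_fun (measurableSet_Wcell c j)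
    fun x hx => iInf_norm_sub_sq_of_mem_voronoi c (Wcell_subset_voronoi c j hx)

/-- Moving `cs j` alone cannot lower the distortion, and on the cells of `cs` it only changes
the `j`-th term. -/
lemma setIntegral_norm_sub_sq_le_of_mem_optimal [NeZero k] {cs : Fin k → H}
    (hP : ∀ᵐ x ∂P, ‖x‖ ≤ M) (hcs : cs ∈ optimal P k) (j : Fin k) (b : H) :
    ∫ x in Wcell k cs j, ‖x - cs j‖ ^ 2 ∂P ≤ ∫ x in Wcell k cs j, ‖x - b‖ ^ 2 ∂P := by
  set F : Fin k → ℝ := fun i => ∫ x in Wcell k cs i, ‖x - cs i‖ ^ 2 ∂P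
  have hmoved : distortion P k (Function.update cs j b) ≤
      ∑ i, Function.update F j (∫ x in Wcell k cs j, ‖x - b‖ ^ 2 ∂P) i := by
    rw [distortion, integral_eq_sum_setIntegral_Wcell cs
      (integrable_iInf_norm_sub_sq_of_ae_norm_le hP _)]
    refine Finset.sum_le_sum fun i _ => ?_
    calc ∫ x in Wcell k cs i, (⨅ l, ‖x - Function.update cs j b l‖ ^ 2) ∂P
        ≤ ∫ x in Wcell k cs i, ‖x - Function.update cs j b i‖ ^ 2 ∂P :=
          setIntegral_mono (integrable_iInf_norm_sub_sq_of_ae_norm_le hP _).integrableOn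
            (integrable_norm_sub_sq_of_ae_norm_le hP _).integrableOn
            fun x => iInf_norm_sub_sq_le _ x i
      _ = Function.update F j (∫ x in Wcell k cs j, ‖x - b‖ ^ 2 ∂P) i := by
          rcases eq_or_ne i j with rfl | hij <;> simp [F, *]
  have h := (hcs _).trans hmoved
  rw [distortion_eq_sum_setIntegral_Wcell hP, Finset.sum_update_of_mem (Finset.mem_univ j),
    Finset.sum_eq_add_sum_sdiff_singleton_of_mem (Finset.mem_univ j)] at h
  linarith

variable [InnerProductSpace ℝ H] [CompleteSpace H]

lemma setIntegral_sub_eq_zero_of_mem_optimal [NeZero k] {cs : Fin k → H} (hP : ∀ᵐ x ∂P, ‖x‖ ≤ M)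
    (hcs : cs ∈ optimal P k) (j : Fin k) : ∫ x in Wcell k cs j, (x - cs j) ∂P = 0 :=
  integral_sub_eq_zero_of_forall_le (integrable_id_of_ae_norm_le hP).integrableOn
    (integrable_norm_sub_sq_of_ae_norm_le hP _).integrableOn
    (setIntegral_norm_sub_sq_le_of_mem_optimal hP hcs j)

lemma setIntegral_norm_sub_sq_eq_of_mem_optimal [NeZero k] {cs : Fin k → H}
    (hP : ∀ᵐ x ∂P, ‖x‖ ≤ M) (hcs : cs ∈ optimal P k) (j : Fin k) (b : H) :
    ∫ x in Wcell k cs j, ‖x - b‖ ^ 2 ∂P =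
      ∫ x in Wcell k cs j, ‖x - cs j‖ ^ 2 ∂P + P.real (Wcell k cs j) * ‖cs j - b‖ ^ 2 := by
  rw [integral_norm_sub_sq_eq (integrable_id_of_ae_norm_le hP).integrableOn
    (integrable_norm_sub_sq_of_ae_norm_le hP _).integrableOn b,
    setIntegral_sub_eq_zero_of_mem_optimal hP hcs j, inner_zero_right, mul_zero, add_zero,
    measureReal_restrict_apply_univ]

lemma norm_le_of_mem_optimal [NeZero k] {cs : Fin k → H} (hP : ∀ᵐ x ∂P, ‖x‖ ≤ M)
    (hcs : cs ∈ optimal P k) {j : Fin k} (hj : P (Wcell k cs j) ≠ 0) : ‖cs j‖ ≤ M := by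
  have : NeZero (P.restrict (Wcell k cs j)) := ⟨by simpa using hj⟩
  exact norm_le_of_integral_sub_eq_zero (ae_restrict_of_ae hP)
    (integrable_id_of_ae_norm_le hP).integrableOn (setIntegral_sub_eq_zero_of_mem_optimal hP hcs j)

end BoundedSupport

section Margin

variable {H : Type*} [NormedAddCommGroup H] [MeasurableSpace H] {P : Measure H} {k : ℕ}
  {cs : Fin k → H}

lemma Bsep_le_norm_sub (hcs : cs ∈ optimal P k) {i j : Fin k} (hij : i ≠ j) :
    Bsep P k ≤ ‖cs i - cs j‖ :=
  csInf_le ⟨0, by rintro r ⟨c, -, i, j, -, rfl⟩; exact norm_nonneg _⟩ ⟨cs, hcs, i, j, hij, rfl⟩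

lemma pmin_le_measureReal_voronoi (hcs : cs ∈ optimal P k) (j : Fin k) :
    pmin P k ≤ P.real (voronoi k cs j) :=
  csInf_le ⟨0, by rintro r ⟨c, -, j, rfl⟩; exact ENNReal.toReal_nonneg⟩ ⟨cs, hcs, j, rfl⟩

lemma measureReal_le_pweight [IsFiniteMeasure P] (hcs : cs ∈ optimal P k) (t : ℝ) :
    P.real {x | infDist x (Ncrit k cs) ≤ t} ≤ pweight P k t :=
  le_csSup ⟨P.real Set.univ, by rintro r ⟨c, -, rfl⟩; exact measureReal_mono (Set.subset_univ _)⟩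
    ⟨cs, hcs, rfl⟩

lemma MarginCondition.measure_Ncrit_eq_zero [IsFiniteMeasure P] {M r₀ : ℝ}
    (h : MarginCondition P k M r₀) (hcs : cs ∈ optimal P k) : P (Ncrit k cs) = 0 := by
  have h0 := (measureReal_le_pweight hcs 0).trans (h.2.2 0 le_rfl h.1.le)
  rw [mul_zero, zero_div] at h0
  have hthick : P {x | infDist x (Ncrit k cs) ≤ 0} = 0 :=
    (measureReal_eq_zero_iff).mp (le_antisymm h0 measureReal_nonneg)
  exact measure_mono_null (fun x hx => (infDist_zero_of_mem hx).le) hthick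

lemma measure_Wcell_eq_measure_voronoi (hN : P (Ncrit k cs) = 0) (j : Fin k) :
    P (Wcell k cs j) = P (voronoi k cs j) :=
  measure_sdiff_null' (measure_mono_null (voronoi_inter_iUnion_voronoi_subset_Ncrit cs j) hN)

end Margin

section Excess

variable {H : Type*} [NormedAddCommGroup H] [InnerProductSpace ℝ H] {k : ℕ} {cs : Fin k → H}

lemma infDist_Ncrit_le_of_mem_voronoi {x : H} {i j : Fin k} {B : ℝ}
    (hx : x ∈ voronoi k cs j) (hij : i ≠ j) (hB : 0 < B) (hBij : B ≤ ‖cs j - cs i‖) :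
    infDist x (Ncrit k cs) ≤ (‖x - cs i‖ ^ 2 - ‖x - cs j‖ ^ 2) / (2 * B) := by
  have hne : cs i ≠ cs j := fun h => by rw [h, sub_self, norm_zero] at hBij; linarith
  obtain ⟨y, hy, hxy⟩ := exists_norm_sub_eq_norm_sub_and_dist_eq x hne
  have hgap : 0 ≤ ‖x - cs i‖ ^ 2 - ‖x - cs j‖ ^ 2 := sub_nonneg.mpr (by gcongr; exact hx i)
  calc infDist x (Ncrit k cs)
      ≤ dist x y :=
        infDist_le_dist_of_mem (Set.mem_iUnion₂.mpr ⟨i, j, Set.mem_iUnion.mpr ⟨hij, hy⟩⟩)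
    _ = (‖x - cs i‖ ^ 2 - ‖x - cs j‖ ^ 2) / (2 * ‖cs j - cs i‖) := by rw [hxy, abs_of_nonneg hgap]
    _ ≤ (‖x - cs i‖ ^ 2 - ‖x - cs j‖ ^ 2) / (2 * B) := by gcongr

/-- Passing between `cs` and `c` moves each squared distance by at most `4Mδ`
(`norm_sub_sq_sub_norm_sub_sq_le`), so a point of the `j`-th cell of `cs` that `c` sends
elsewhere is nearly equidistant from two points of `cs`. -/
lemma norm_sub_sq_le_iInf_add_indicator {c : Fin k → H} {x : H} {j : Fin k} {M δ B : ℝ}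
    (hx : x ∈ voronoi k cs j) (hxM : ‖x‖ ≤ M) (hcM : ∀ i, ‖c i‖ ≤ M) (hcsM : ∀ i, ‖cs i‖ ≤ M)
    (hδ : ∀ i, ‖c i - cs i‖ ≤ δ) (hB : 0 < B) (hBsep : ∀ i l, i ≠ l → B ≤ ‖cs i - cs l‖) :
    ‖x - c j‖ ^ 2 ≤ (⨅ i, ‖x - c i‖ ^ 2) +
      {y | infDist y (Ncrit k cs) ≤ 4 * M * δ / B}.indicator (fun _ => 8 * M * δ) x := by
  have : Nonempty (Fin k) := ⟨j⟩
  have hM : 0 ≤ M := (norm_nonneg x).trans hxM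
  have hδ0 : 0 ≤ δ := (norm_nonneg _).trans (hδ j)
  set A := {y | infDist y (Ncrit k cs) ≤ 4 * M * δ / B}
  obtain ⟨i, hi⟩ := exists_mem_voronoi c x
  rw [iInf_norm_sub_sq_of_mem_voronoi c hi]
  rcases eq_or_ne i j with rfl | hij
  · linarith [A.indicator_nonneg (fun _ _ => by positivity : ∀ y ∈ A, (0 : ℝ) ≤ 8 * M * δ) x]
  have hci : ‖x - c i‖ ^ 2 ≤ ‖x - c j‖ ^ 2 := by gcongr; exact hi j
  have hcsj : ‖x - cs j‖ ^ 2 ≤ ‖x - cs i‖ ^ 2 := by gcongr; exact hx i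
  have hswap_j := norm_sub_sq_sub_norm_sub_sq_le hxM (hcM j) (hcsM j)
  have hswap_i := norm_sub_sq_sub_norm_sub_sq_le hxM (hcsM i) (hcM i)
  rw [norm_sub_rev (cs i) (c i)] at hswap_i
  have hδj : 4 * M * ‖c j - cs j‖ ≤ 4 * M * δ := by gcongr; exact hδ j
  have hδi : 4 * M * ‖c i - cs i‖ ≤ 4 * M * δ := by gcongr; exact hδ i
  have hnear : x ∈ A :=
    (infDist_Ncrit_le_of_mem_voronoi hx hij hB (hBsep j i hij.symm)).trans <| by
      rw [div_le_div_iff₀ (by positivity) hB]; nlinarith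
  rw [Set.indicator_of_mem hnear]
  linarith

end Excess

section LocalConvexity

variable {H : Type*} [NormedAddCommGroup H] [InnerProductSpace ℝ H] [MeasurableSpace H]
  [BorelSpace H] [SecondCountableTopology H] [CompleteSpace H] {P : Measure H} {k : ℕ}

lemma sum_measureReal_mul_norm_sub_sq_le [IsFiniteMeasure P] [NeZero k] {cs c : Fin k → H}
    {M δ B : ℝ} (hP : ∀ᵐ x ∂P, ‖x‖ ≤ M) (hcs : cs ∈ optimal P k) (hcM : ∀ i, ‖c i‖ ≤ M)
    (hcsM : ∀ i, ‖cs i‖ ≤ M) (hδ : ∀ i, ‖c i - cs i‖ ≤ δ) (hB : 0 < B)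
    (hBsep : ∀ i l, i ≠ l → B ≤ ‖cs i - cs l‖) :
    ∑ j, P.real (Wcell k cs j) * ‖c j - cs j‖ ^ 2 ≤
      distortion P k c - distortion P k cs +
        8 * M * δ * P.real {x | infDist x (Ncrit k cs) ≤ 4 * M * δ / B} := by
  set A := {x | infDist x (Ncrit k cs) ≤ 4 * M * δ / B}
  have hA : MeasurableSet A :=
    (isClosed_le (continuous_infDist_pt _) continuous_const).measurableSet
  have hind : Integrable (A.indicator fun _ => 8 * M * δ) P := (integrable_const _).indicator hA
  have hinf := integrable_iInf_norm_sub_sq_of_ae_norm_le hP c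
  have hcell : ∀ j, ∫ x in Wcell k cs j, ‖x - c j‖ ^ 2 ∂P ≤
      ∫ x in Wcell k cs j, (⨅ i, ‖x - c i‖ ^ 2) ∂P +
        ∫ x in Wcell k cs j, A.indicator (fun _ => 8 * M * δ) x ∂P := by
    intro j
    rw [← integral_add hinf.integrableOn hind.integrableOn]
    refine integral_mono_ae (integrable_norm_sub_sq_of_ae_norm_le hP _).integrableOn
      (hinf.add hind).integrableOn ?_
    filter_upwards [ae_restrict_mem (measurableSet_Wcell cs j), ae_restrict_of_ae hP]
      with x hxW hxM
    exact norm_sub_sq_le_iInf_add_indicator (Wcell_subset_voronoi cs j hxW) hxM hcM hcsM hδ hB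
      hBsep
  have hexcess : ∑ j, ∫ x in Wcell k cs j, A.indicator (fun _ => 8 * M * δ) x ∂P =
      8 * M * δ * P.real A := by
    rw [← integral_eq_sum_setIntegral_Wcell cs hind, integral_indicator_const _ hA, smul_eq_mul,
      mul_comm]
  rw [distortion, integral_eq_sum_setIntegral_Wcell cs hinf,
    distortion_eq_sum_setIntegral_Wcell hP cs, ← hexcess, ← Finset.sum_sub_distrib,
    ← Finset.sum_add_distrib]
  refine Finset.sum_le_sum fun j _ => ?_
  have := hcell j
  rw [setIntegral_norm_sub_sq_eq_of_mem_optimal hP hcs j (c j), norm_sub_rev] at this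
  linarith

lemma MarginCondition.pmin_mul_cbDist_sq_le [IsProbabilityMeasure P] [NeZero k] {M r₀ : ℝ}
    {cs c : Fin k → H} (hmargin : MarginCondition P k M r₀) (hM : 0 < M)
    (hcs : cs ∈ optimal P k) (hcM : ∀ j, ‖c j‖ ≤ M) (hp : 0 < pmin P k) (hB : 0 < Bsep P k)
    (ht : 4 * M * cbDist k c cs / Bsep P k ≤ r₀) :
    3 / 4 * pmin P k * cbDist k c cs ^ 2 ≤ distortion P k c - distortion P k cs := by
  set δ := cbDist k c cs
  have hδ0 : 0 ≤ δ := Real.sqrt_nonneg _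
  have hP := hmargin.2.1.ae_norm_le
  have hcell : ∀ j, pmin P k ≤ P.real (Wcell k cs j) := fun j => by
    rw [measureReal_def, measure_Wcell_eq_measure_voronoi (hmargin.measure_Ncrit_eq_zero hcs)]
    exact pmin_le_measureReal_voronoi hcs j
  have hcsM : ∀ j, ‖cs j‖ ≤ M := fun j =>
    norm_le_of_mem_optimal hP hcs ((measureReal_ne_zero_iff).mp (hp.trans_le (hcell j)).ne')
  have hgain : pmin P k * δ ^ 2 ≤ ∑ j, P.real (Wcell k cs j) * ‖c j - cs j‖ ^ 2 := by
    rw [cbDist_sq, Finset.mul_sum]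
    gcongr with j
    exact hcell j
  have hloss := sum_measureReal_mul_norm_sub_sq_le hP hcs hcM hcsM (norm_sub_le_cbDist c cs) hB
    fun i l => Bsep_le_norm_sub hcs
  have hmass := (measureReal_le_pweight hcs _).trans (hmargin.2.2 _ (by positivity) ht)
  have hval : 8 * M * δ * (Bsep P k * pmin P k * (4 * M * δ / Bsep P k) / (128 * M ^ 2)) =
      pmin P k * δ ^ 2 / 4 := by
    field_simp; ring
  nlinarith [mul_le_mul_of_nonneg_left hmass (by positivity : 0 ≤ 8 * M * δ)]

end LocalConvexity

end Kmeans

open Kmeans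

variable {H : Type*} [NormedAddCommGroup H] [InnerProductSpace ℝ H]
  [MeasurableSpace H] [BorelSpace H] [SecondCountableTopology H] [CompleteSpace H]

theorem local_convexity_of_margin_general
    (P : Measure H) [IsProbabilityMeasure P] (k : ℕ) (M r₀ : ℝ)
    (hk : 1 ≤ k) (hM : 0 < M)
    (hmargin : MarginCondition P k M r₀) :
    ∀ cs ∈ optimal P k, ∀ c : Fin k → H,
      (∀ j : Fin k, c j ∈ closedBall (0 : H) M) →
      cbDist k c cs ≤ Bsep P k * r₀ / (4 * Real.sqrt 2 * M) →
      pmin P k / 2 * ∑ j : Fin k, ‖c j - cs j‖ ^ 2 ≤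
        distortion P k c - distortion P k cs := by
  intro cs hcs c hc hdist
  have : NeZero k := ⟨by omega⟩
  have hopt := sub_nonneg.mpr (hcs c)
  rw [← cbDist_sq]
  set δ := cbDist k c cs
  rcases le_or_gt (pmin P k) 0 with hp | hp
  · nlinarith [sq_nonneg δ]
  have hδ0 : 0 ≤ δ := Real.sqrt_nonneg _
  rcases hδ0.eq_or_lt with hδ | hδ
  · rw [← hδ]; simpa using hopt
  have hdist' : δ * (4 * Real.sqrt 2 * M) ≤ Bsep P k * r₀ :=
    (le_div_iff₀ (by positivity)).mp hdist
  have hB : 0 < Bsep P k :=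
    pos_of_mul_pos_left ((by positivity : 0 < δ * (4 * Real.sqrt 2 * M)).trans_le hdist')
      hmargin.1.le
  have ht : 4 * M * δ / Bsep P k ≤ r₀ := by
    rw [div_le_iff₀ hB]
    nlinarith [Real.one_lt_sqrt_two, mul_pos hδ hM]
  have hbound := hmargin.pmin_mul_cbDist_sq_le hM hcs (fun j => mem_closedBall_zero_iff.mp (hc j))
    hp hB ht
  nlinarith [mul_pos hp (pow_pos hδ 2)]

/-- local convexity of the distortion around optimal codebooks
under the margin condition. -/
theorem local_convexity_of_margin
    (P : Measure H) [IsProbabilityMeasure P] (k : ℕ) (M r₀ : ℝ)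
    (hk : 1 ≤ k) (hM : 0 < M) (hsupp : SupportMoreThan P k)
    (hmargin : MarginCondition P k M r₀) :
    ∀ cs ∈ optimal P k, ∀ c : Fin k → H,
      (∀ j : Fin k, c j ∈ closedBall (0 : H) M) →
      cbDist k c cs ≤ Bsep P k * r₀ / (4 * Real.sqrt 2 * M) →
      pmin P k / 2 * ∑ j : Fin k, ‖c j - cs j‖ ^ 2 ≤
        distortion P k c - distortion P k cs :=
  local_convexity_of_margin_general P k M r₀ hk hM hmargin
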